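/- arXiv:1606.06760 — 2 statements merged into one kernel-verified Lean document; each statement's English description precedes it below -/
import Mathlib

section
/- Let (s_p)_{p≥1} be natural numbers with 0 ≤ s_p ≤ p for all p ≥ 1 and s_p → ∞ as p → ∞, and define E = ⋃_{p=1}^{∞} {k ∈ ℕ : 2^p ≤ k < 2^{p+1} and ν(k) ≥ s_p}. Then E is a thin set if and only if ∑_{p=1}^{∞} s_p / 2^{s_p} < ∞. -/
/-!
Writing `k + 1 = 2^s j`, the `k ∈ K_q` with `ν(k) ≥ s` correspond to the
`j ∈ (2^(q-s), 2^(q-s+1)]`, with `ν(k) = v₂(j) + s`; by Legendre's formula `∑ v₂(j) = 2^(q-s)`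
over that range. Hence `C(E ∩ K_q) = (s_q + 1) 2^(q - s_q)`, the `q`-th term of the thinness
series is `(s_q + 1) / 2^s_q`, and since `s_q ≥ 1` eventually this is at most twice `s_q / 2^s_q`.
-/

open scoped ENNReal

/-- `nu k` is ν(k): the number of trailing 1-bits of `k`, i.e. the maximal `m ≥ 0` such that
the binary digits `ε_0, …, ε_{m-1}` of `k` are all `1`; equivalently the 2-adic valuation
of `k + 1`. -/
def nu (k : ℕ) : ℕ := padicValNat 2 (k + 1)

/-- The discrete capacity `C(e) = ∑_{k ∈ e} ν(k)`, valued in `[0, ∞]`. -/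
noncomputable def cap (e : Set ℕ) : ℝ≥0∞ := ∑' k : e, (nu k : ℝ≥0∞)

/-- The dyadic block `K_p = {k : 2^p ≤ k < 2^(p+1)}`. -/
def Kblock (p : ℕ) : Set ℕ := {k : ℕ | 2 ^ p ≤ k ∧ k < 2 ^ (p + 1)}

/-- A set `e ⊆ ℕ` is thin if `∑_{p=1}^∞ 2^{-p} C(e ∩ K_p) < ∞`. -/
def Thin (e : Set ℕ) : Prop :=
  ∑' p : ℕ, cap (e ∩ Kblock (p + 1)) / 2 ^ (p + 1) ≠ ⊤

/-- A set `e ⊆ ℕ` is thick if it is not thin. -/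
def Thick (e : Set ℕ) : Prop := ¬ Thin e

open Finset Filter

theorem sum_Ioc_padicValNat_eq_padicValNat_factorial (p : ℕ) [Fact p.Prime] (n : ℕ) :
    ∑ j ∈ Ioc 0 n, padicValNat p j = padicValNat p n.factorial := by
  induction n with
  | zero => simp
  | succ n ih =>
    rw [sum_Ioc_succ_top n.zero_le, ih, Nat.factorial_succ,
      padicValNat.mul n.succ_ne_zero n.factorial_ne_zero, add_comm]

theorem sum_Ioc_mul_padicValNat_eq_self (p : ℕ) [hp : Fact p.Prime] (n : ℕ) :
    ∑ j ∈ Ioc n (p * n), padicValNat p j = n := by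
  have hsplit := sum_Ioc_consecutive (padicValNat p) n.zero_le
    (Nat.le_mul_of_pos_left n hp.out.pos)
  rw [sum_Ioc_padicValNat_eq_padicValNat_factorial, sum_Ioc_padicValNat_eq_padicValNat_factorial,
    padicValNat_factorial_mul] at hsplit
  omega

theorem filter_dvd_Ioc_mul_eq_map {d : ℕ} (hd : 0 < d) (a b : ℕ) :
    {m ∈ Ioc (a * d) (b * d) | d ∣ m} =
      (Ioc a b).map ⟨(· * d), mul_left_injective₀ hd.ne'⟩ := by
  ext m
  simp only [mem_filter, mem_Ioc, Finset.mem_map, Function.Embedding.coeFn_mk,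
    dvd_iff_exists_eq_mul_left]
  constructor
  · rintro ⟨⟨hlo, hhi⟩, j, rfl⟩
    exact ⟨j, ⟨(Nat.mul_lt_mul_right hd).1 hlo, (Nat.mul_le_mul_right_iff hd).1 hhi⟩, rfl⟩
  · rintro ⟨j, ⟨hlo, hhi⟩, rfl⟩
    exact ⟨⟨(Nat.mul_lt_mul_right hd).2 hlo, (Nat.mul_le_mul_right_iff hd).2 hhi⟩, j, rfl⟩

theorem sum_Ioc_filter_le_padicValNat (p : ℕ) [hp : Fact p.Prime] (s n : ℕ) :
    ∑ m ∈ Ioc (n * p ^ s) (p * n * p ^ s) with s ≤ padicValNat p m, padicValNat p m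
      = n + s * (p * n - n) := by
  have hps : 0 < p ^ s := pow_pos hp.out.pos s
  have hfilter : {m ∈ Ioc (n * p ^ s) (p * n * p ^ s) | s ≤ padicValNat p m}
      = {m ∈ Ioc (n * p ^ s) (p * n * p ^ s) | p ^ s ∣ m} :=
    filter_congr fun m hm => (padicValNat_dvd_iff_le (by grind)).symm
  have hval : ∀ j ∈ Ioc n (p * n), padicValNat p (j * p ^ s) = padicValNat p j + s := by
    intro j hj
    rw [padicValNat.mul (by grind) hps.ne', padicValNat.prime_pow]
  rw [hfilter, filter_dvd_Ioc_mul_eq_map hps, sum_map, Function.Embedding.coeFn_mk,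
    sum_congr rfl hval, sum_add_distrib, sum_Ioc_mul_padicValNat_eq_self, sum_const,
    Nat.card_Ioc, smul_eq_mul, mul_comm]

theorem sum_Ico_filter_le_nu {q s : ℕ} (hsq : s ≤ q) :
    ∑ k ∈ Ico (2 ^ q) (2 ^ (q + 1)) with s ≤ nu k, nu k = (s + 1) * 2 ^ (q - s) := by
  have hshift : ∑ k ∈ Ico (2 ^ q) (2 ^ (q + 1)) with s ≤ nu k, nu k
      = ∑ m ∈ Ioc (2 ^ q) (2 ^ (q + 1)) with s ≤ padicValNat 2 m, padicValNat 2 m := by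
    rw [← Ico_add_one_add_one_eq_Ioc, ← map_add_right_Ico, filter_map, sum_map]
    rfl
  have hlo : 2 ^ q = 2 ^ (q - s) * 2 ^ s := by rw [← pow_add, Nat.sub_add_cancel hsq]
  have hhi : 2 ^ (q + 1) = 2 * 2 ^ (q - s) * 2 ^ s := by rw [pow_succ, hlo]; ring
  have hcount := sum_Ioc_filter_le_padicValNat 2 s (2 ^ (q - s))
  rw [← hlo, ← hhi] at hcount
  rw [hshift, hcount, two_mul, Nat.add_sub_cancel]
  ring

theorem ENNReal.tsum_ne_top_of_eventually_le {f g : ℕ → ℝ≥0∞} (hf : ∀ n, f n ≠ ∞)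
    (hfg : ∀ᶠ n in atTop, f n ≤ g n) (hg : ∑' n, g n ≠ ∞) : ∑' n, f n ≠ ∞ := by
  obtain ⟨N, hN⟩ := eventually_atTop.1 hfg
  have htail : ∑' n, f (n + N) ≤ ∑' n, g n :=
    calc ∑' n, f (n + N) ≤ ∑' n, g (n + N) := ENNReal.tsum_le_tsum fun n => hN _ le_add_self
      _ ≤ ∑' n, g n := by
        rw [← ENNReal.summable.sum_add_tsum_nat_add' (f := g) (k := N)]
        exact le_add_self
  rw [← ENNReal.summable.sum_add_tsum_nat_add' (f := f) (k := N)]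
  exact ENNReal.add_ne_top.2
    ⟨ENNReal.sum_ne_top.2 fun n _ => hf n, ne_top_of_le_ne_top hg htail⟩

theorem ENNReal.tsum_add_one_mul_ne_top_iff {t : ℕ → ℕ} (ht : Tendsto t atTop atTop)
    {w : ℕ → ℝ≥0∞} (hw : ∀ n, w n ≠ ∞) :
    ∑' n, (t n + 1 : ℝ≥0∞) * w n ≠ ∞ ↔ ∑' n, (t n : ℝ≥0∞) * w n ≠ ∞ := by
  refine ⟨fun h => ne_top_of_le_ne_top h
    (ENNReal.tsum_le_tsum fun n => by gcongr; exact le_self_add), fun h => ?_⟩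
  refine ENNReal.tsum_ne_top_of_eventually_le (g := fun n => 2 * (t n * w n))
    (fun n => ENNReal.mul_ne_top (by simp) (hw n)) ?_
    (by rw [ENNReal.tsum_mul_left]; exact ENNReal.mul_ne_top (by simp) h)
  filter_upwards [ht.eventually_ge_atTop 1] with n hn
  rw [← mul_assoc]
  gcongr
  exact_mod_cast (by omega : t n + 1 ≤ 2 * t n)

theorem inter_Kblock_eq (s : ℕ → ℕ) {q : ℕ} (hq : 1 ≤ q) :
    {k : ℕ | ∃ p, 1 ≤ p ∧ 2 ^ p ≤ k ∧ k < 2 ^ (p + 1) ∧ s p ≤ nu k} ∩ Kblock q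
      = ↑({k ∈ Ico (2 ^ q) (2 ^ (q + 1)) | s q ≤ nu k}) := by
  ext k
  simp only [Set.mem_inter_iff, Set.mem_ofPred_eq, Kblock, coe_filter, mem_Ico]
  constructor
  · rintro ⟨⟨p, -, hpk, hkp, hsk⟩, hqk, hkq⟩
    obtain rfl : p = q := (Nat.log_eq_of_pow_le_of_lt_pow hpk hkp).symm.trans
      (Nat.log_eq_of_pow_le_of_lt_pow hqk hkq)
    exact ⟨⟨hpk, hkp⟩, hsk⟩
  · rintro ⟨⟨hqk, hkq⟩, hsk⟩
    exact ⟨⟨q, hq, hqk, hkq, hsk⟩, hqk, hkq⟩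

theorem cap_inter_Kblock_div (s : ℕ → ℕ) {q : ℕ} (hq : 1 ≤ q) (hsq : s q ≤ q) :
    cap ({k : ℕ | ∃ p, 1 ≤ p ∧ 2 ^ p ≤ k ∧ k < 2 ^ (p + 1) ∧ s p ≤ nu k} ∩ Kblock q)
        / 2 ^ q = (s q + 1 : ℝ≥0∞) / 2 ^ s q := by
  have hpow : (2 : ℝ≥0∞) ^ q = 2 ^ s q * 2 ^ (q - s q) := by
    rw [← pow_add, Nat.add_sub_cancel' hsq]
  rw [cap, inter_Kblock_eq s hq, Finset.tsum_subtype' _ fun k => (nu k : ℝ≥0∞),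
    ← Nat.cast_sum, sum_Ico_filter_le_nu hsq]
  push_cast
  rw [hpow, ENNReal.mul_div_mul_right _ _ (by simp) (by simp)]

/-- Proposition 2: for `0 ≤ s_p ≤ p` with `s_p → ∞`, the set
`E = ⋃_{p≥1} {k : 2^p ≤ k < 2^(p+1), ν(k) ≥ s_p}` is thin iff `∑_{p≥1} s_p / 2^(s_p) < ∞`. -/
theorem thin_iff_summable (s : ℕ → ℕ) (hs : ∀ p, 1 ≤ p → s p ≤ p)
    (hstend : Filter.Tendsto s Filter.atTop Filter.atTop) :
    Thin {k : ℕ | ∃ p, 1 ≤ p ∧ 2 ^ p ≤ k ∧ k < 2 ^ (p + 1) ∧ s p ≤ nu k} ↔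
      ∑' p : ℕ, (s (p + 1) : ℝ≥0∞) / 2 ^ s (p + 1) ≠ ⊤ := by
  have hterm (p : ℕ) := cap_inter_Kblock_div s p.succ_pos (hs (p + 1) p.succ_pos)
  rw [Thin, tsum_congr hterm]
  simp only [div_eq_mul_inv]
  exact ENNReal.tsum_add_one_mul_ne_top_iff (hstend.comp (tendsto_add_atTop_nat 1))
    fun p => by simp
end

section
/- Let (s_p)_{p≥1} be natural numbers with 0 ≤ s_p ≤ p for all p ≥ 1 and s_p → ∞ as p → ∞, and let E = ⋃_{p=1}^{∞} {k ∈ ℕ : 2^p ≤ k < 2^{p+1} and ν(k) ≥ s_p}. Then E has zero density in the natural numbers: ρ_m(E) = |{k ∈ E : 1 ≤ k ≤ m}| / m → 0 as m → ∞. -/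
/-- `ρ_m(E) = |{k ∈ E : 1 ≤ k ≤ m}| / m`, the density of `E` up to `m`. -/
noncomputable def rho (E : Set ℕ) (m : ℕ) : ℝ := (E ∩ Set.Icc 1 m).ncard / m

open Filter Topology

lemma pow_dvd_succ_iff_le_nu {n k : ℕ} : 2 ^ n ∣ k + 1 ↔ n ≤ nu k :=
  padicValNat_dvd_iff_le (by omega)

lemma ncard_dvd_succ_inter_Icc_le (d m : ℕ) :
    ({k | d ∣ k + 1} ∩ Set.Icc 1 m).ncard ≤ (m + 1) / d := by
  rw [← Nat.Ioc_filter_dvd_card_eq_div, ← Set.ncard_coe_finset,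
    ← Set.ncard_image_of_injective _ (add_left_injective 1)]
  refine Set.ncard_le_ncard ?_ (Finset.finite_toSet _)
  rintro _ ⟨k, ⟨hdvd, -, hkm⟩, rfl⟩
  simp only [Finset.coe_filter, Finset.mem_Ioc, Set.mem_ofPred_eq]
  exact ⟨⟨k.succ_pos, by omega⟩, hdvd⟩

lemma ncard_inter_Icc_le_of_dvd_succ {E : Set ℕ} {N d : ℕ} (hE : ∀ k ∈ E, N ≤ k → d ∣ k + 1)
    (m : ℕ) : (E ∩ Set.Icc 1 m).ncard ≤ N + (m + 1) / d := by
  have hsub : E ∩ Set.Icc 1 m ⊆ ↑(Finset.range N) ∪ {k | d ∣ k + 1} ∩ Set.Icc 1 m := by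
    rintro k ⟨hkE, hk⟩
    by_cases hkN : k < N
    · exact Or.inl (Finset.mem_range.2 hkN)
    · exact Or.inr ⟨hE k hkE (not_lt.1 hkN), hk⟩
  calc (E ∩ Set.Icc 1 m).ncard
      ≤ (↑(Finset.range N) ∪ {k | d ∣ k + 1} ∩ Set.Icc 1 m).ncard :=
        Set.ncard_le_ncard hsub
          ((Finset.finite_toSet _).union ((Set.finite_Icc 1 m).inter_of_right _))
    _ ≤ N + (m + 1) / d := by
        grw [Set.ncard_union_le, Set.ncard_coe_finset, Finset.card_range,
          ncard_dvd_succ_inter_Icc_le]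

lemma rho_le_of_dvd_succ {E : Set ℕ} {N d : ℕ} (hE : ∀ k ∈ E, N ≤ k → d ∣ k + 1)
    {m : ℕ} (hm : 0 < m) : rho E m ≤ N / m + 2 / d := by
  have hcount : ((E ∩ Set.Icc 1 m).ncard : ℝ) ≤ N + (m + 1) / d := by
    grw [ncard_inter_Icc_le_of_dvd_succ hE m, Nat.cast_add, Nat.cast_div_le]
    push_cast
    rfl
  have hm1 : (1 : ℝ) ≤ m := by exact_mod_cast hm
  rw [rho, div_le_iff₀ (by linarith)]
  calc ((E ∩ Set.Icc 1 m).ncard : ℝ) ≤ N + (m + 1) / d := hcount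
    _ ≤ N + 2 * m / d := by gcongr; linarith
    _ = (N / m + 2 / d) * m := by field_simp

theorem tendsto_rho_zero_of_forall_exists_le_nu {E : Set ℕ}
    (hE : ∀ n, ∃ N, ∀ k ∈ E, N ≤ k → n ≤ nu k) : Tendsto (rho E) atTop (𝓝 0) := by
  refine tendsto_order.2
    ⟨fun ε hε => Eventually.of_forall fun m => hε.trans_le ?_, fun ε hε => ?_⟩
  · unfold rho; positivity
  obtain ⟨n, hn⟩ := exists_pow_lt_of_lt_one (by positivity : (0 : ℝ) < ε / 4) one_half_lt_one
  obtain ⟨N, hN⟩ := hE n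
  have hdvd : ∀ k ∈ E, N ≤ k → 2 ^ n ∣ k + 1 := fun k hk hNk =>
    pow_dvd_succ_iff_le_nu.2 (hN k hk hNk)
  filter_upwards [eventually_gt_atTop 0,
    (tendsto_const_div_atTop_nhds_zero_nat (N : ℝ)).eventually_lt_const (half_pos hε)]
    with m hm hNm
  calc rho E m ≤ N / m + 2 / (2 ^ n : ℕ) := rho_le_of_dvd_succ hdvd hm
    _ < ε / 2 + ε / 2 := by
        rw [Nat.cast_pow, Nat.cast_ofNat, div_eq_mul_one_div (2 : ℝ), ← one_div_pow]
        gcongr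
        linarith
    _ = ε := add_halves ε

lemma exists_forall_le_nu_of_tendsto {s : ℕ → ℕ} (hs : Tendsto s atTop atTop) (n : ℕ) :
    ∃ N, ∀ k ∈ {k : ℕ | ∃ p, 1 ≤ p ∧ 2 ^ p ≤ k ∧ k < 2 ^ (p + 1) ∧ s p ≤ nu k},
      N ≤ k → n ≤ nu k := by
  obtain ⟨P, hP⟩ := eventually_atTop.1 (hs.eventually_ge_atTop n)
  refine ⟨2 ^ P, ?_⟩
  rintro k ⟨p, -, -, hkp, hsp⟩ hPk
  have hPp : P < p + 1 := (Nat.pow_lt_pow_iff_right (by norm_num)).1 (hPk.trans_lt hkp)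
  exact (hP p (by omega)).trans hsp

theorem density_zero_general (s : ℕ → ℕ)
    (hstend : Filter.Tendsto s Filter.atTop Filter.atTop) :
    Filter.Tendsto
      (fun m : ℕ => rho {k : ℕ | ∃ p, 1 ≤ p ∧ 2 ^ p ≤ k ∧ k < 2 ^ (p + 1) ∧ s p ≤ nu k} m)
      Filter.atTop (nhds 0) :=
  tendsto_rho_zero_of_forall_exists_le_nu (exists_forall_le_nu_of_tendsto hstend)

/-- For `0 ≤ s_p ≤ p` with `s_p → ∞`, the set
`E = ⋃_{p≥1} {k : 2^p ≤ k < 2^(p+1), ν(k) ≥ s_p}` has zero density in `ℕ`: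
`ρ_m(E) → 0` as `m → ∞`. -/
theorem density_zero (s : ℕ → ℕ) (hs : ∀ p, 1 ≤ p → s p ≤ p)
    (hstend : Filter.Tendsto s Filter.atTop Filter.atTop) :
    Filter.Tendsto
      (fun m : ℕ => rho {k : ℕ | ∃ p, 1 ≤ p ∧ 2 ^ p ≤ k ∧ k < 2 ^ (p + 1) ∧ s p ≤ nu k} m)
      Filter.atTop (nhds 0) :=
  density_zero_general s hstend
end
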